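/- Let n ≥ 1, let ρ be any 2^n × 2^n complex matrix, and let P, P' be two distinct Z-type Pauli strings (n-fold tensor products of matrices from {I, Z}). Then summing over all 2^n X-type Pauli strings Q (n-fold tensor products of matrices from {I, X}) one has ∑_Q Q · P · Q · ρ · Q · P' · Q = 0. (Restricted Pauli Twirl, Z-type errors twirled by X-strings.) -/
import Mathlib


open Matrix

/-- The four single-qubit Pauli matrices I, X, Y, Z. -/
noncomputable def pauli : Fin 4 → Matrix (Fin 2) (Fin 2) ℂ :=
  ![!![1, 0; 0, 1], !![0, 1; 1, 0], !![0, -Complex.I; Complex.I, 0], !![1, 0; 0, -1]]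

/-- The `n`-qubit Pauli string `⊗ᵢ σ_{f i}`. -/
noncomputable def PauliString (n : ℕ) (f : Fin n → Fin 4) :
    Matrix (Fin n → Fin 2) (Fin n → Fin 2) ℂ :=
  Matrix.of fun x y => ∏ i, pauli (f i) (x i) (y i)

/-- A Z-type Pauli string: every factor lies in `{I, Z}`, encoded by a bit string. -/
noncomputable def Zstring (n : ℕ) (a : Fin n → Fin 2) :
    Matrix (Fin n → Fin 2) (Fin n → Fin 2) ℂ :=
  PauliString n fun i => if a i = 0 then 0 else 3

/-- An X-type Pauli string: every factor lies in `{I, X}`, encoded by a bit string. -/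
noncomputable def Xstring (n : ℕ) (b : Fin n → Fin 2) :
    Matrix (Fin n → Fin 2) (Fin n → Fin 2) ℂ :=
  PauliString n fun i => if b i = 0 then 0 else 1

/-- sign character -/
noncomputable def Sgn (n : ℕ) (a x : Fin n → Fin 2) : ℂ :=
  ∏ i, if a i = 1 ∧ x i = 1 then (-1 : ℂ) else 1

lemma xfac (b x y : Fin 2) :
    pauli (if b = 0 then 0 else 1) x y = if y = x + b then 1 else 0 := by
  fin_cases b <;> fin_cases x <;> fin_cases y <;> simp [pauli]

lemma zfac (a x y : Fin 2) :
    pauli (if a = 0 then 0 else 3) x y =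
      if x = y then (if a = 1 ∧ x = 1 then (-1 : ℂ) else 1) else 0 := by
  fin_cases a <;> fin_cases x <;> fin_cases y <;> simp [pauli]

lemma Xstring_apply (n : ℕ) (b x y : Fin n → Fin 2) :
    Xstring n b x y = if y = x + b then 1 else 0 := by
  simp only [Xstring, PauliString, Matrix.of_apply, xfac]
  rw [Finset.prod_boole]
  congr 1
  simp [funext_iff]

lemma Zstring_apply (n : ℕ) (a x y : Fin n → Fin 2) :
    Zstring n a x y = if x = y then Sgn n a x else 0 := by
  simp only [Zstring, PauliString, Matrix.of_apply, zfac]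
  by_cases h : x = y
  · subst h; simp [Sgn]
  · rw [if_neg h]
    obtain ⟨i, hi⟩ := Function.ne_iff.mp h
    exact Finset.prod_eq_zero (Finset.mem_univ i) (if_neg hi)

lemma two_cancel (n : ℕ) (c b : Fin n → Fin 2) : c + b + b = c := by
  funext i
  have : ∀ p q : Fin 2, p + q + q = p := by decide
  exact this (c i) (b i)

lemma Xmul (n : ℕ) (b : Fin n → Fin 2) (M : Matrix (Fin n → Fin 2) (Fin n → Fin 2) ℂ) :
    Xstring n b * M = Matrix.of fun x y => M (x + b) y := by
  ext x y
  rw [Matrix.mul_apply]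
  simp [Xstring_apply]

lemma mulX (n : ℕ) (b : Fin n → Fin 2) (M : Matrix (Fin n → Fin 2) (Fin n → Fin 2) ℂ) :
    M * Xstring n b = Matrix.of fun x y => M x (y + b) := by
  ext x y
  rw [Matrix.mul_apply]
  have : ∀ v : Fin n → Fin 2, (y = v + b) = (v = y + b) := by
    intro v
    apply propext
    constructor
    · rintro rfl; rw [two_cancel]
    · rintro rfl; rw [two_cancel]
  simp [Xstring_apply, this]

lemma Sgn_add (n : ℕ) (a x y : Fin n → Fin 2) :
    Sgn n a (x + y) = Sgn n a x * Sgn n a y := by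
  unfold Sgn
  rw [← Finset.prod_mul_distrib]
  apply Finset.prod_congr rfl
  intro i _
  have : ∀ p q r : Fin 2, (if p = 1 ∧ (q + r) = 1 then (-1 : ℂ) else 1) =
      (if p = 1 ∧ q = 1 then (-1 : ℂ) else 1) * (if p = 1 ∧ r = 1 then (-1 : ℂ) else 1) := by
    intro p q r
    fin_cases p <;> fin_cases q <;> fin_cases r <;> norm_num <;> decide
  exact this (a i) (x i) (y i)

lemma conjX (n : ℕ) (a b : Fin n → Fin 2) :
    Xstring n b * Zstring n a * Xstring n b = Sgn n a b • Zstring n a := by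
  rw [Xmul, mulX]
  ext x y
  simp only [Matrix.of_apply, Matrix.smul_apply, Zstring_apply, smul_eq_mul]
  have hiff : (x + b = y + b) = (x = y) := by
    apply propext
    constructor
    · intro h
      have := congrArg (· + b) h
      simpa [two_cancel] using this
    · rintro rfl; rfl
  by_cases h : x = y
  · subst h
    simp [Sgn_add, mul_comm]
  · have h2 : x + b ≠ y + b := fun hc => h (by rw [← two_cancel n x b, hc, two_cancel])
    simp [h, h2]

theorem restricted_pauli_twirl_Z (n : ℕ) (hn : 1 ≤ n)
    (ρ : Matrix (Fin n → Fin 2) (Fin n → Fin 2) ℂ)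
    (P P' : Matrix (Fin n → Fin 2) (Fin n → Fin 2) ℂ)
    (hP : ∃ a : Fin n → Fin 2, P = Zstring n a)
    (hP' : ∃ a : Fin n → Fin 2, P' = Zstring n a)
    (hPP' : P ≠ P') :
    ∑ b : Fin n → Fin 2,
      Xstring n b * P * Xstring n b * ρ * Xstring n b * P' * Xstring n b = 0 := by
  obtain ⟨a, rfl⟩ := hP
  obtain ⟨a', rfl⟩ := hP'
  have haa : a ≠ a' := fun h => hPP' (by rw [h])
  have key : ∀ b : Fin n → Fin 2,
      Xstring n b * Zstring n a * Xstring n b * ρ * Xstring n b * Zstring n a' * Xstring n b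
        = (Sgn n a b * Sgn n a' b) • (Zstring n a * ρ * Zstring n a') := by
    intro b
    have hassoc :
        Xstring n b * Zstring n a * Xstring n b * ρ * Xstring n b * Zstring n a' * Xstring n b
          = (Xstring n b * Zstring n a * Xstring n b) * ρ *
              (Xstring n b * Zstring n a' * Xstring n b) := by
      simp only [Matrix.mul_assoc]
    rw [hassoc, conjX, conjX]
    rw [Matrix.smul_mul, Matrix.mul_smul, Matrix.smul_mul, smul_smul,
      mul_comm (Sgn n a' b)]
  simp_rw [key]
  rw [← Finset.sum_smul]
  have hsum : ∑ b : Fin n → Fin 2, Sgn n a b * Sgn n a' b = 0 := by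
    unfold Sgn
    simp_rw [← Finset.prod_mul_distrib]
    have h1 : (∑ b : Fin n → Fin 2, ∏ i,
        (if a i = 1 ∧ b i = 1 then (-1 : ℂ) else 1) *
          (if a' i = 1 ∧ b i = 1 then (-1 : ℂ) else 1))
        = ∏ i, ∑ c : Fin 2,
            (if a i = 1 ∧ c = 1 then (-1 : ℂ) else 1) *
              (if a' i = 1 ∧ c = 1 then (-1 : ℂ) else 1) := by
      rw [Finset.prod_univ_sum, Fintype.piFinset_univ]
    rw [h1]
    obtain ⟨i, hi⟩ := Function.ne_iff.mp haa
    apply Finset.prod_eq_zero (Finset.mem_univ i)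
    have : ∀ p q : Fin 2, p ≠ q →
        (∑ c : Fin 2, (if p = 1 ∧ c = 1 then (-1 : ℂ) else 1) *
          (if q = 1 ∧ c = 1 then (-1 : ℂ) else 1)) = 0 := by
      intro p q hpq
      fin_cases p <;> fin_cases q <;> simp_all [Fin.sum_univ_two]
    exact this (a i) (a' i) hi
  rw [hsum, zero_smul]
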